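/- Let n and k be integers with 1 ≤ k ≤ n − 3, and let J_{n,k} ⊆ K[x_1,…,x_n] be the ideal generated by all squarefree monomials x_{i_1} ··· x_{i_{k+2}} with 1 ≤ i_1 < … < i_{k+2} ≤ n for which there exists t < k+2 with i_{t+1} − i_t ≥ 2; order G(J_{n,k}) by the lexicographic order induced by x_1 > … > x_n (an order of linear quotients). For u ∈ G(J_{n,k}) let set(u) = { l : x_l ∈ ( v ∈ G(J_{n,k}) : v >_lex u ) : u }. Then max{ |set(u)| : u ∈ G(J_{n,k}) } = n − k − 2. (Hence projdim HS_k(I(P_n^c)) = n − k − 2.) -/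

import Mathlib

/-!
If `x_l x_T` is divisible by a generator `x_U` with `|U| = |T|` and `U ≠ T`, then `l ∉ T`;
hence `|set(x_T)| ≤ n - (k + 2)`. Conversely, exchanging some `m > l` of `T` for `l ∉ T` gives a
lexicographically larger set dividing `x_l x_T`, so `l ∈ set(x_T)` as soon as that set still has
a gap. For `T = {1, n-k, n-k+1, …, n}` this holds for every `l ∉ T`: exchanging `n - k` for `l`
leaves the gap `l < n - k < n` (here `k ≥ 1` keeps `n` in the set). Indices here are 1-based as
in the paper; `Fin n` is 0-based.
-/

open MvPolynomial

/-- `T = {i_1 < ⋯ < i_r}` has a gap: some consecutive pair of elements of `T` differs by ≥ 2. -/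
def HasGap {n : ℕ} (T : Finset (Fin n)) : Prop :=
  ∃ a ∈ T, ∃ b ∈ T, (a : ℕ) + 2 ≤ (b : ℕ) ∧ ∀ x ∈ T, a < x → b ≤ x

/-- The exponent vector of the squarefree monomial `x_T = ∏_{i ∈ T} x_i`. -/
noncomputable def sqfree {n : ℕ} (T : Finset (Fin n)) : Fin n →₀ ℕ :=
  ∑ i ∈ T, Finsupp.single i 1

/-- `a >_lex b` for the lexicographic order on monomials induced by `x_1 > x_2 > ⋯ > x_n`. -/
def lexGT {n : ℕ} (a b : Fin n →₀ ℕ) : Prop :=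
  ∃ i : Fin n, (∀ j : Fin n, j < i → a j = b j) ∧ b i < a i

namespace MvPolynomial

theorem X_mem_colon_span_monomial_iff {σ R : Type*} [CommSemiring R] [Nontrivial R]
    {s : Set (σ →₀ ℕ)} {t : σ →₀ ℕ} {l : σ} :
    X l ∈ (Ideal.span ((fun s ↦ monomial s (1 : R)) '' s)).colon
        (Ideal.span {monomial t (1 : R)}) ↔
      ∃ u ∈ s, u ≤ Finsupp.single l 1 + t := by
  classical
  rw [Ideal.mem_colon_span_singleton, X, monomial_mul, one_mul, mem_ideal_span_monomial_image,
    support_monomial, if_neg one_ne_zero]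
  simp

end MvPolynomial

section Sqfree

variable {n : ℕ}

lemma sqfree_apply (T : Finset (Fin n)) (i : Fin n) :
    sqfree T i = if i ∈ T then 1 else 0 := by
  classical
  simp [sqfree, Finsupp.finsetSum_apply, Finsupp.single_apply]

lemma sqfree_le_single_add_sqfree_iff {U T : Finset (Fin n)} {l : Fin n} :
    sqfree U ≤ Finsupp.single l 1 + sqfree T ↔ U ⊆ insert l T := by
  classical
  simp only [Finsupp.le_def, Finsupp.add_apply, sqfree_apply, Finsupp.single_apply,
    Finset.subset_iff, Finset.mem_insert]
  refine forall_congr' fun i ↦ ?_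
  by_cases hU : i ∈ U <;> by_cases hT : i ∈ T <;> by_cases hl : l = i <;>
    simp [hU, hT, hl, eq_comm]

lemma lexGT_irrefl (a : Fin n →₀ ℕ) : ¬ lexGT a a :=
  fun ⟨_, _, h⟩ ↦ h.false

lemma lexGT_sqfree_exchange {T : Finset (Fin n)} {l m : Fin n} (hl : l ∉ T) (hlm : l < m) :
    lexGT (sqfree (insert l (T.erase m))) (sqfree T) := by
  refine ⟨l, fun j hj ↦ ?_, ?_⟩
  · simp [sqfree_apply, hj.ne, (hj.trans hlm).ne]
  · simp [sqfree_apply, hl]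

end Sqfree

lemma HasGap.of_lt_of_notMem {n : ℕ} {T : Finset (Fin n)} {a b c : Fin n} (ha : a ∈ T)
    (hb : b ∉ T) (hc : c ∈ T) (hab : a < b) (hbc : b < c) : HasGap T := by
  classical
  have hbelow : (T.filter (· < b)).Nonempty := ⟨a, by simp [ha, hab]⟩
  have habove : (T.filter (b < ·)).Nonempty := ⟨c, by simp [hc, hbc]⟩
  set a' := (T.filter (· < b)).max' hbelow
  set c' := (T.filter (b < ·)).min' habove
  have ha' : a' ∈ T ∧ a' < b := Finset.mem_filter.mp ((T.filter (· < b)).max'_mem hbelow)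
  have hc' : c' ∈ T ∧ b < c' := Finset.mem_filter.mp ((T.filter (b < ·)).min'_mem habove)
  refine ⟨a', ha'.1, c', hc'.1, ?_, fun x hx hax ↦ ?_⟩
  · have := Fin.lt_def.mp ha'.2
    have := Fin.lt_def.mp hc'.2
    omega
  · rcases lt_trichotomy x b with hxb | rfl | hbx
    · exact absurd ((T.filter (· < b)).le_max' x (by simp [hx, hxb])) (not_le.mpr hax)
    · exact absurd hx hb
    · exact (T.filter (b < ·)).min'_le x (by simp [hx, hbx])

section LinearQuotients

variable (K : Type*) [CommSemiring K] {n : ℕ} (k : ℕ)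

/-- `set(x_T)` of the paper: the generators of `J_{n,k}` are ordered by `>_lex`. -/
def linearQuotientSet (T : Finset (Fin n)) : Set (Fin n) :=
  {l : Fin n | MvPolynomial.X l ∈
    Submodule.colon
      (Ideal.span {p : MvPolynomial (Fin n) K | ∃ U : Finset (Fin n),
        U.card = k + 2 ∧ HasGap U ∧ lexGT (sqfree U) (sqfree T) ∧
        p = monomial (sqfree U) 1})
      (Ideal.span {(monomial (sqfree T) (1 : K))})}

variable {K k} [Nontrivial K] {T : Finset (Fin n)} {l : Fin n}

theorem mem_linearQuotientSet_iff :
    l ∈ linearQuotientSet K k T ↔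
      ∃ U : Finset (Fin n), U.card = k + 2 ∧ HasGap U ∧ lexGT (sqfree U) (sqfree T) ∧
        U ⊆ insert l T := by
  have hgens : {p : MvPolynomial (Fin n) K | ∃ U : Finset (Fin n),
      U.card = k + 2 ∧ HasGap U ∧ lexGT (sqfree U) (sqfree T) ∧ p = monomial (sqfree U) 1} =
      (fun s ↦ monomial s 1) '' (sqfree '' {U | U.card = k + 2 ∧ HasGap U ∧
        lexGT (sqfree U) (sqfree T)}) := by
    ext p
    simp only [Set.mem_ofPred_eq, Set.image_image, Set.mem_image, eq_comm (a := p), and_assoc]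
  rw [linearQuotientSet, Set.mem_ofPred_eq, hgens, X_mem_colon_span_monomial_iff]
  simp only [Set.exists_mem_image, Set.mem_ofPred_eq, sqfree_le_single_add_sqfree_iff, and_assoc]

theorem linearQuotientSet_subset_compl (hT : T.card = k + 2) :
    linearQuotientSet K k T ⊆ ↑Tᶜ := by
  intro l hl
  obtain ⟨U, hU, -, hlex, hsub⟩ := mem_linearQuotientSet_iff.mp hl
  rw [Finset.coe_compl, Set.mem_compl_iff, Finset.mem_coe]
  intro hlT
  rw [Finset.insert_eq_of_mem hlT] at hsub
  obtain rfl := Finset.eq_of_subset_of_card_le hsub (by rw [hT, hU])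
  exact lexGT_irrefl _ hlex

theorem mem_linearQuotientSet_of_exchange (hT : T.card = k + 2) {m : Fin n} (hl : l ∉ T)
    (hm : m ∈ T) (hlm : l < m) (hgap : HasGap (insert l (T.erase m))) :
    l ∈ linearQuotientSet K k T := by
  refine mem_linearQuotientSet_iff.mpr ⟨insert l (T.erase m), ?_, hgap,
    lexGT_sqfree_exchange hl hlm, Finset.insert_subset_insert l (T.erase_subset m)⟩
  rw [Finset.card_insert_of_notMem (fun h ↦ hl (Finset.mem_of_mem_erase h)),
    Finset.card_erase_of_mem hm, hT]
  omega

theorem linearQuotientSet_eq_compl (hT : T.card = k + 2)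
    (hexch : ∀ l ∉ T, ∃ m ∈ T, l < m ∧ HasGap (insert l (T.erase m))) :
    linearQuotientSet K k T = ↑Tᶜ := by
  refine (linearQuotientSet_subset_compl hT).antisymm fun l hl ↦ ?_
  have hlT : l ∉ T := by simpa using hl
  obtain ⟨m, hm, hlm, hgap⟩ := hexch l hlT
  exact mem_linearQuotientSet_of_exchange hT hlT hm hlm hgap

end LinearQuotients

theorem exists_hasGap_forall_exchange_hasGap {n k : ℕ} (hk : 1 ≤ k) (hn : k + 3 ≤ n) :
    ∃ T : Finset (Fin n), T.card = k + 2 ∧ HasGap T ∧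
      ∀ l ∉ T, ∃ m ∈ T, l < m ∧ HasGap (insert l (T.erase m)) := by
  classical
  set T : Finset (Fin n) := (Finset.Icc ⟨1, by omega⟩ ⟨n - k - 2, by omega⟩)ᶜ
  have mem : ∀ i : Fin n, i ∈ T ↔ (i : ℕ) = 0 ∨ n - k - 2 < i := by
    intro i
    simp only [T, Finset.mem_compl, Finset.mem_Icc, Fin.le_def]
    omega
  obtain ⟨c, hc_val⟩ : ∃ c : Fin n, (c : ℕ) = n - k - 1 := ⟨⟨n - k - 1, by omega⟩, rfl⟩
  have hc : c ∈ T := (mem c).mpr (by omega)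
  refine ⟨T, ?_, ?_, fun l hl ↦ ⟨c, hc, ?_, ?_⟩⟩
  · rw [Finset.card_compl, Fin.card_Icc, Fintype.card_fin]
    dsimp only
    omega
  · refine HasGap.of_lt_of_notMem (a := ⟨0, by omega⟩) (b := ⟨1, by omega⟩)
      ((mem _).mpr (Or.inl rfl)) ?_ hc (Fin.lt_def.mpr Nat.zero_lt_one)
      (Fin.lt_def.mpr (by simp only; omega))
    simp only [mem]
    omega
  · simp only [mem, not_or] at hl
    rw [Fin.lt_def]
    omega
  · simp only [mem, not_or] at hl
    have hlast : (⟨n - 1, by omega⟩ : Fin n) ∈ T.erase c :=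
      Finset.mem_erase.mpr
        ⟨Fin.ne_of_val_ne (by simp only; omega), (mem _).mpr (by simp only; omega)⟩
    refine HasGap.of_lt_of_notMem (b := c) (Finset.mem_insert_self l _) ?_
      (Finset.mem_insert_of_mem hlast) (Fin.lt_def.mpr (by omega))
      (Fin.lt_def.mpr (by simp only; omega))
    simp only [Finset.mem_insert, Finset.mem_erase, Fin.ext_iff, not_or]
    omega

/-- for `1 ≤ k ≤ n - 3`, in the ideal `J_{n,k} = HS_k(I(P_n^c))` (generated by the
squarefree monomials `x_{i_1} ⋯ x_{i_{k+2}}` with a gap `i_{t+1} - i_t ≥ 2`), ordered by the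
lexicographic order induced by `x_1 > ⋯ > x_n`, the maximum of `|set(u)|` over the minimal
generators `u` is `n - k - 2`; hence `projdim HS_k(I(P_n^c)) = n - k - 2`. -/
theorem stmt_14 {K : Type*} [Field K] (n k : ℕ) (hk : 1 ≤ k) (hkn : k ≤ n - 3) :
    IsGreatest {m : ℕ | ∃ T : Finset (Fin n), T.card = k + 2 ∧ HasGap T ∧
      m = {l : Fin n | MvPolynomial.X l ∈
        Submodule.colon
          (Ideal.span {p : MvPolynomial (Fin n) K | ∃ U : Finset (Fin n),
            U.card = k + 2 ∧ HasGap U ∧ lexGT (sqfree U) (sqfree T) ∧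
            p = monomial (sqfree U) 1})
          (Ideal.span {(monomial (sqfree T) (1 : K))})}.ncard}
      (n - k - 2) := by
  have ncard_compl : ∀ T : Finset (Fin n), T.card = k + 2 →
      (↑Tᶜ : Set (Fin n)).ncard = n - k - 2 := by
    intro T hT
    rw [Set.ncard_coe_finset, Finset.card_compl, Fintype.card_fin, hT]
    omega
  obtain ⟨T, hT, hgap, hexch⟩ := exists_hasGap_forall_exchange_hasGap hk (n := n) (by omega)
  refine ⟨⟨T, hT, hgap, ?_⟩, ?_⟩
  · show n - k - 2 = (linearQuotientSet K k T).ncard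
    rw [linearQuotientSet_eq_compl hT hexch, ncard_compl T hT]
  · rintro _ ⟨T, hT, -, rfl⟩
    exact ncard_compl T hT ▸ Set.ncard_le_ncard (linearQuotientSet_subset_compl (K := K) hT)
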